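/- arXiv:1111.2984 — 6 statements merged into one kernel-verified Lean document; each statement's English description precedes it below -/
import Mathlib

section
/- Let N ≥ 1 be a natural number and for each i ≥ 1 let P(i) denote the pair (fib i mod N, fib (i+1) mod N) of consecutive Fibonacci residues. If k ≥ 1 is the least index such that P(k) = P(r) for some r > k, then k = 1; in particular the first pair that repeats in the sequence P(1), P(2), P(3), … is the pair (1 mod N, 1 mod N). -/
/-! The step `(a, b) ↦ (b, a + b)` between consecutive Fibonacci pairs is injective, since `a` is
recovered from `a + b` by cancelling `b`. Hence a repetition `P k = P r` with `k ≥ 2` pulls back to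
`P (k - 1) = P (r - 1)`, contradicting the minimality of `k`. -/

theorem eq_of_add_two_eq_of_recurrence {M : Type*} [Add M] [IsRightCancelAdd M] {u : ℕ → M}
    (hu : ∀ n, u (n + 2) = u n + u (n + 1)) {m t : ℕ}
    (h₁ : u (m + 1) = u (t + 1)) (h₂ : u (m + 2) = u (t + 2)) : u m = u t := by
  rw [hu, hu, h₁] at h₂
  exact add_right_cancel h₂

theorem Nat.cast_fib_add_two {R : Type*} [AddMonoidWithOne R] (n : ℕ) :
    (Nat.fib (n + 2) : R) = Nat.fib n + Nat.fib (n + 1) := by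
  rw [Nat.fib_add_two, Nat.cast_add]

def fibPair (R : Type*) [AddMonoidWithOne R] (n : ℕ) : R × R :=
  (Nat.fib n, Nat.fib (n + 1))

theorem fibPair_eq_of_succ_eq {R : Type*} [AddMonoidWithOne R] [IsRightCancelAdd R] {m t : ℕ}
    (h : fibPair R (m + 1) = fibPair R (t + 1)) : fibPair R m = fibPair R t := by
  obtain ⟨h₁, h₂⟩ : (Nat.fib (m + 1) : R) = Nat.fib (t + 1) ∧
      (Nat.fib (m + 2) : R) = Nat.fib (t + 2) := Prod.ext_iff.mp h
  exact Prod.ext (eq_of_add_two_eq_of_recurrence (u := fun n ↦ (Nat.fib n : R))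
    Nat.cast_fib_add_two h₁ h₂) h₁

theorem first_repeated_fib_pair_general (N : ℕ)
    (P : ℕ → ZMod N × ZMod N)
    (hP : ∀ i, P i = ((Nat.fib i : ZMod N), (Nat.fib (i + 1) : ZMod N)))
    (k : ℕ) (hk : 1 ≤ k)
    (hrep : ∃ r, k < r ∧ P k = P r)
    (hleast : ∀ j, 1 ≤ j → (∃ r, j < r ∧ P j = P r) → k ≤ j) :
    k = 1 ∧ P k = ((1 : ZMod N), (1 : ZMod N)) := by
  obtain rfl : P = fibPair (ZMod N) := funext hP
  have hk_eq : k = 1 := by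
    by_contra hk_ne
    obtain ⟨m, rfl⟩ : ∃ m, k = m + 1 := ⟨k - 1, by omega⟩
    obtain ⟨r, hr, hkr⟩ := hrep
    obtain ⟨t, rfl⟩ : ∃ t, r = t + 1 := ⟨r - 1, by omega⟩
    have : m + 1 ≤ m := hleast m (by omega) ⟨t, by omega, fibPair_eq_of_succ_eq hkr⟩
    omega
  subst hk_eq
  simp [fibPair]

theorem first_repeated_fib_pair (N : ℕ) (hN : 1 ≤ N)
    (P : ℕ → ZMod N × ZMod N)
    (hP : ∀ i, P i = ((Nat.fib i : ZMod N), (Nat.fib (i + 1) : ZMod N)))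
    (k : ℕ) (hk : 1 ≤ k)
    (hrep : ∃ r, k < r ∧ P k = P r)
    (hleast : ∀ j, 1 ≤ j → (∃ r, j < r ∧ P j = P r) → k ≤ j) :
    k = 1 ∧ P k = ((1 : ZMod N), (1 : ZMod N)) :=
  first_repeated_fib_pair_general N P hP k hk hrep hleast
end

section
/- For every natural number N ≥ 1 there exists a natural number t with 1 < t ≤ N² + 1 such that fib t ≡ 1 (mod N) and fib (t+1) ≡ 1 (mod N). -/
/-! The step `(a, b) ↦ (b, a + b)` is a bijection of the finite set `ZMod N × ZMod N` of size `N²`,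
so the orbit of `(0, 1)` is a cycle of some length `p` with `1 ≤ p ≤ N²`. Since the `n`-th iterate
of the step sends `(0, 1)` to `(fib n, fib (n + 1))`, the residues of the Fibonacci sequence satisfy
`fib p = 0` and `fib (p + 1) = 1`, hence `fib (p + 1) = fib (p + 2) = 1`, and `t = p + 1` works. -/

open Function

def fibStep {R : Type*} [Add R] (x : R × R) : R × R := (x.2, x.1 + x.2)

theorem fibStep_injective {R : Type*} [Add R] [IsRightCancelAdd R] :
    Injective (fibStep : R × R → R × R) := by
  rintro ⟨a, b⟩ ⟨c, d⟩ h
  simp only [fibStep, Prod.mk.injEq] at h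
  obtain ⟨rfl, hsum⟩ := h
  rw [add_right_cancel hsum]

theorem fibStep_iterate_zero_one {R : Type*} [NonAssocSemiring R] (n : ℕ) :
    fibStep^[n] ((0, 1) : R × R) = ((Nat.fib n : R), (Nat.fib (n + 1) : R)) := by
  induction n with
  | zero => simp
  | succ n ih => rw [iterate_succ_apply', ih, fibStep, Nat.fib_add_two, Nat.cast_add]

theorem exists_fib_zmod_period (N : ℕ) [NeZero N] :
    ∃ p : ℕ, 0 < p ∧ p ≤ N ^ 2 ∧ (Nat.fib p : ZMod N) = 0 ∧ (Nat.fib (p + 1) : ZMod N) = 1 := by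
  set x : ZMod N × ZMod N := (0, 1)
  refine ⟨minimalPeriod fibStep x,
    minimalPeriod_pos_of_mem_periodicPts (fibStep_injective.mem_periodicPts x), ?_, ?_⟩
  · simpa [ZMod.card, sq] using minimalPeriod_le_card (f := fibStep) (x := x)
  · have h := iterate_minimalPeriod (f := fibStep) (x := x)
    rwa [fibStep_iterate_zero_one, Prod.mk.injEq] at h

theorem fib_pair_one_one_repeats (N : ℕ) (hN : 1 ≤ N) :
    ∃ t : ℕ, 1 < t ∧ t ≤ N ^ 2 + 1 ∧
      (Nat.fib t : ZMod N) = 1 ∧ (Nat.fib (t + 1) : ZMod N) = 1 := by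
  have : NeZero N := ⟨by omega⟩
  obtain ⟨p, hp_pos, hp_le, hfib_p, hfib_succ⟩ := exists_fib_zmod_period N
  refine ⟨p + 1, by omega, by omega, hfib_succ, ?_⟩
  rw [Nat.fib_add_two, Nat.cast_add, hfib_p, hfib_succ, zero_add]
end

section
/- Let N > 2 be a natural number and t ≥ 1. If fib t ≡ 0 (mod N) and fib (t+1) ≡ 1 (mod N), then t is even. -/
/-- Cassini's identity `fib (n + 1) * fib (n - 1) - fib n ^ 2 = (-1) ^ n`, with
`fib (n - 1)` replaced by `fib (n + 1) - fib n` so that it also holds at `n = 0`. -/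
theorem Nat.fib_add_one_sq_sub_fib_add_one_mul_fib_sub_fib_sq {R : Type*} [CommRing R] (n : ℕ) :
    (Nat.fib (n + 1) : R) ^ 2 - Nat.fib (n + 1) * Nat.fib n - Nat.fib n ^ 2 = (-1) ^ n := by
  induction n with
  | zero => simp
  | succ n ih =>
    rw [Nat.fib_add_two, Nat.cast_add, pow_succ]
    linear_combination -ih

theorem fib_zero_one_even_general (N : ℕ) (hN : 2 < N) (t : ℕ)
    (h0 : (Nat.fib t : ZMod N) = 0) (h1 : (Nat.fib (t + 1) : ZMod N) = 1) :
    Even t := by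
  have : Fact (2 < N) := ⟨hN⟩
  have hsign : (-1 : ZMod N) ^ t = 1 := by
    simpa [h0, h1] using
      (Nat.fib_add_one_sq_sub_fib_add_one_mul_fib_sub_fib_sq (R := ZMod N) t).symm
  exact (neg_one_pow_eq_one_iff_even (CharP.neg_one_ne_one (ZMod N) N)).mp hsign

theorem fib_zero_one_even (N : ℕ) (hN : 2 < N) (t : ℕ) (ht : 1 ≤ t)
    (h0 : (Nat.fib t : ZMod N) = 0) (h1 : (Nat.fib (t + 1) : ZMod N) = 1) :
    Even t :=
  fib_zero_one_even_general N hN t h0 h1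
end

section
/- Let N ≥ 1 and t ≥ 1 be natural numbers and let A₂ = !![1, 1; 1, 2] regarded as a matrix over ZMod N. Then A₂^t = 1 (the identity matrix over ZMod N) if and only if fib (2t) ≡ 0 (mod N) and fib (2t - 1) ≡ 1 (mod N). -/
/-! Since `!![1, 1; 1, 2]` is the square of the Fibonacci matrix `!![0, 1; 1, 1]`, whose `n`-th
power has entries `fib (n - 1), fib n, fib n, fib (n + 1)`, the power `!![1, 1; 1, 2] ^ t` is the
symmetric matrix with entries `fib (2t - 1), fib (2t), fib (2t + 1)`; as the last entry is the sum
of the other two, it is the identity exactly when `fib (2t) = 0` and `fib (2t - 1) = 1`. -/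

open Matrix

section

variable {R : Type*}

theorem fibMatrix_pow_succ [Semiring R] (n : ℕ) :
    (!![0, 1; 1, 1] : Matrix (Fin 2) (Fin 2) R) ^ (n + 1) =
      !![(Nat.fib n : R), Nat.fib (n + 1); Nat.fib (n + 1), Nat.fib (n + 2)] := by
  induction n with
  | zero => simp
  | succ n ih =>
    rw [pow_succ, ih, mul_fin_two]
    simp [Nat.fib_add_two]

theorem catMatrix_eq_fibMatrix_sq [Semiring R] :
    (!![1, 1; 1, 2] : Matrix (Fin 2) (Fin 2) R) = !![0, 1; 1, 1] ^ 2 := by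
  rw [sq, mul_fin_two]
  norm_num [one_add_one_eq_two]

theorem catMatrix_pow_succ [Semiring R] (n : ℕ) :
    (!![1, 1; 1, 2] : Matrix (Fin 2) (Fin 2) R) ^ (n + 1) =
      !![(Nat.fib (2 * n + 1) : R), Nat.fib (2 * n + 2);
        Nat.fib (2 * n + 2), Nat.fib (2 * n + 3)] := by
  rw [catMatrix_eq_fibMatrix_sq, ← pow_mul, show 2 * (n + 1) = 2 * n + 1 + 1 by ring,
    fibMatrix_pow_succ]

theorem of_fin_two_symm_add_eq_one_iff [AddGroupWithOne R] (a b : R) :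
    !![a, b; b, a + b] = 1 ↔ b = 0 ∧ a = 1 := by
  rw [one_fin_two, ← Matrix.ext_iff]
  simp only [Fin.forall_fin_two, of_apply, cons_val', cons_val_zero, cons_val_one,
    empty_val', cons_val_fin_one]
  constructor
  · rintro ⟨⟨ha, hb⟩, -⟩
    exact ⟨hb, ha⟩
  · rintro ⟨rfl, rfl⟩
    simp

end

theorem cat_map_pow_eq_one_iff_general (N : ℕ) (t : ℕ) (ht : 1 ≤ t) :
    (!![1, 1; 1, 2] : Matrix (Fin 2) (Fin 2) (ZMod N)) ^ t = 1 ↔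
      (Nat.fib (2 * t) : ZMod N) = 0 ∧ (Nat.fib (2 * t - 1) : ZMod N) = 1 := by
  obtain ⟨n, rfl⟩ := Nat.exists_eq_add_of_le' ht
  have hfib : Nat.fib (2 * n + 3) = Nat.fib (2 * n + 1) + Nat.fib (2 * n + 2) := Nat.fib_add_two
  rw [catMatrix_pow_succ, hfib, Nat.cast_add, of_fin_two_symm_add_eq_one_iff,
    show 2 * (n + 1) = 2 * n + 2 by ring, show 2 * n + 2 - 1 = 2 * n + 1 by omega]

theorem cat_map_pow_eq_one_iff (N : ℕ) (hN : 1 ≤ N) (t : ℕ) (ht : 1 ≤ t) :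
    (!![1, 1; 1, 2] : Matrix (Fin 2) (Fin 2) (ZMod N)) ^ t = 1 ↔
      (Nat.fib (2 * t) : ZMod N) = 0 ∧ (Nat.fib (2 * t - 1) : ZMod N) = 1 :=
  cat_map_pow_eq_one_iff_general N t ht
end

section
/- For every natural number N ≥ 3 there exists a positive natural number M with M ≤ N²/2 such that !![1, 1; 1, 2]^M = 1 as matrices over ZMod N. In particular, the period of Arnold's discrete cat map on an N×N grid (the least such positive M) is at most N²/2. -/
/-!
Write `F = !![0, 1; 1, 1]` for the Fibonacci matrix, so that `!![1, 1; 1, 2] = F ^ 2`. Every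
power of `F` has the form `!![a, b; b, a + b]` and is therefore determined by its first row, so
modulo `N` the order of `F` is at most `N ^ 2`. Since `det F = -1` and `-1 ≠ 1` in `ZMod N` for
`N ≥ 3`, that order is even, say `2 * c`; then `c ≤ N ^ 2 / 2` and `(F ^ 2) ^ c = 1`.
-/

open Matrix

lemma IsOfFinOrder.orderOf_le_natCard {M : Type*} [Monoid M] {x : M} (hx : IsOfFinOrder x)
    {s : Set M} (hs : s.Finite) (hxs : ∀ n : ℕ, x ^ n ∈ s) : orderOf x ≤ Nat.card s := by
  rw [← Nat.card_fin (orderOf x), ← Nat.card_congr (finEquivPowers hx).symm]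
  exact Nat.card_mono hs fun _ ⟨n, hn⟩ ↦ hn ▸ hxs n

def fibMatrix (R : Type*) [Semiring R] : Matrix (Fin 2) (Fin 2) R := !![0, 1; 1, 1]

section Semiring

variable {R : Type*} [Semiring R]

lemma fibMatrix_sq : fibMatrix R ^ 2 = !![1, 1; 1, 2] := by
  rw [sq, fibMatrix, mul_fin_two]
  norm_num [one_add_one_eq_two]

lemma fibMatrix_pow_mem_range (k : ℕ) :
    fibMatrix R ^ k ∈ Set.range fun p : R × R ↦ !![p.1, p.2; p.2, p.1 + p.2] := by
  induction k with
  | zero => exact ⟨(1, 0), by simp [one_fin_two]⟩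
  | succ k ih =>
    obtain ⟨⟨a, b⟩, hab⟩ := ih
    refine ⟨(b, a + b), ?_⟩
    rw [pow_succ, ← hab, fibMatrix, mul_fin_two]
    simp

end Semiring

section CommRing

variable {R : Type*} [CommRing R]

lemma det_fibMatrix : (fibMatrix R).det = -1 := by
  simp [fibMatrix, det_fin_two_of]

lemma isOfFinOrder_fibMatrix [Finite R] : IsOfFinOrder (fibMatrix R) :=
  IsUnit.isOfFinOrder <| (isUnit_iff_isUnit_det _).2 <| det_fibMatrix (R := R) ▸ isUnit_one.neg

lemma orderOf_fibMatrix_le [Finite R] : orderOf (fibMatrix R) ≤ Nat.card R ^ 2 :=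
  calc orderOf (fibMatrix R)
      ≤ Nat.card (Set.range fun p : R × R ↦ !![p.1, p.2; p.2, p.1 + p.2]) :=
        isOfFinOrder_fibMatrix.orderOf_le_natCard (Set.finite_range _) fibMatrix_pow_mem_range
    _ ≤ Nat.card (R × R) := Finite.card_range_le _
    _ = Nat.card R ^ 2 := by rw [Nat.card_prod, sq]

lemma even_orderOf_fibMatrix (h : (-1 : R) ≠ 1) : Even (orderOf (fibMatrix R)) := by
  rw [← neg_one_pow_eq_one_iff_even h, ← det_fibMatrix, ← det_pow, pow_orderOf_eq_one, det_one]

end CommRing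

theorem cat_map_period_le (N : ℕ) (hN : 3 ≤ N) :
    ∃ M : ℕ, 0 < M ∧ M ≤ N ^ 2 / 2 ∧
      (!![1, 1; 1, 2] : Matrix (Fin 2) (Fin 2) (ZMod N)) ^ M = 1 := by
  have : NeZero N := ⟨by omega⟩
  have : Fact (2 < N) := ⟨hN⟩
  obtain ⟨c, hc⟩ := even_orderOf_fibMatrix (R := ZMod N) ZMod.neg_one_ne_one
  have hpos := (isOfFinOrder_fibMatrix (R := ZMod N)).orderOf_pos
  have hle := orderOf_fibMatrix_le (R := ZMod N)
  rw [Nat.card_zmod] at hle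
  refine ⟨c, by omega, by omega, ?_⟩
  rw [← fibMatrix_sq, ← pow_mul, two_mul, ← hc, pow_orderOf_eq_one]
end

section
/- For every natural number s ≥ 1, if N = 5^s then the period of Arnold's discrete cat map on an N×N grid equals 2N; that is, the least positive integer M with !![1,1;1,2]^M = 1 over ZMod (5^s) is M = 2·5^s. -/
/-!
Over `ℤ`, write `A = !![1, 1; 1, 2]`. Since `(1 + 5 ^ k y) ^ 5 = 1 + 5 ^ (k + 1) (y + 5 z)` for
`k ≥ 1`, starting from `A ^ 2 = 1 + !![1, 3; 3, 4]` and `A ^ 10 = 1 + 5 Y` with `5 ∤ Y 0 1` one gets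
`A ^ (2 * 5 ^ t) = 1 + 5 ^ t Y_t` with `5 ∤ Y_t 0 1`. Hence modulo `5 ^ s` the matrix `A ^ 2` has
order exactly `5 ^ s`. Moreover `A ^ (5 ^ s) ≠ 1` already modulo `5`, where `A ^ 5` has order `2`
and `5 ^ s` is odd. So the order of `A` modulo `5 ^ s` is `2 * 5 ^ s`.
-/

open Polynomial

theorem isLeast_orderOf {G : Type*} [Monoid G] {x : G} (hx : IsOfFinOrder x) :
    IsLeast {n : ℕ | 0 < n ∧ x ^ n = 1} (orderOf x) :=
  ⟨⟨hx.orderOf_pos, pow_orderOf_eq_one x⟩, fun _ ⟨hn, h⟩ => orderOf_le_of_pow_eq_one hn h⟩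

theorem orderOf_eq_mul_prime_pow {G : Type*} [Monoid G] {x : G} {p q n : ℕ}
    (hp : p.Prime) (hq : q.Prime) (hnot : ¬x ^ (q * p ^ n) = 1)
    (hfin : x ^ (q * p ^ (n + 1)) = 1) (hpow : ¬x ^ p ^ (n + 1) = 1) :
    orderOf x = q * p ^ (n + 1) := by
  have := Fact.mk hp
  have hq_dvd : q ∣ orderOf x := by
    by_contra h
    exact hpow <| orderOf_dvd_iff_pow_eq_one.1 <|
      (hq.coprime_iff_not_dvd.2 h).symm.dvd_of_dvd_mul_left (orderOf_dvd_of_pow_eq_one hfin)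
  have hsq : orderOf (x ^ q) = orderOf x / q := orderOf_pow_of_dvd hq.ne_zero hq_dvd
  rw [orderOf_eq_prime_pow (by rwa [← pow_mul]) (by rwa [← pow_mul])] at hsq
  rw [hsq, Nat.mul_div_cancel' hq_dvd]

theorem exists_one_add_five_pow_nsmul_pow_five {R : Type*} [Ring R] (k : ℕ) (y : R) :
    ∃ z : R, (1 + 5 ^ (k + 1) • y) ^ 5 = 1 + 5 ^ (k + 2) • (y + 5 • z) := by
  -- The identity only involves `y`, so it suffices to prove it in `ℤ[X]`.
  let z : ℤ[X] := 2 * 5 ^ k * X ^ 2 + 2 * 5 ^ (2 * k + 1) * X ^ 3 + 5 ^ (3 * k + 2) * X ^ 4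
    + 5 ^ (4 * k + 2) * X ^ 5
  have h : (1 + 5 ^ (k + 1) • X : ℤ[X]) ^ 5 = 1 + 5 ^ (k + 2) • (X + 5 • z) := by
    simp only [nsmul_eq_mul]; push_cast; ring
  refine ⟨aeval y z, ?_⟩
  simpa only [map_add, map_nsmul, map_pow, map_one, aeval_X] using congrArg (aeval y) h

theorem exists_one_add_five_pow_nsmul_pow_five_pow {R : Type*} [Ring R] (k n : ℕ) (y : R) :
    ∃ z : R, (1 + 5 ^ (k + 1) • y) ^ 5 ^ n = 1 + 5 ^ (k + n + 1) • (y + 5 • z) := by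
  induction n with
  | zero => exact ⟨0, by simp⟩
  | succ n ih =>
    obtain ⟨z, hz⟩ := ih
    obtain ⟨z', hz'⟩ := exists_one_add_five_pow_nsmul_pow_five (k + n) (y + 5 • z)
    refine ⟨z + z', ?_⟩
    rw [pow_succ 5 n, pow_mul, hz, hz', smul_add 5 z z', add_assoc y]
    rfl

def catMatrix (R : Type*) [Ring R] : Matrix (Fin 2) (Fin 2) R := !![1, 1; 1, 2]

theorem mapMatrix_catMatrix {R S : Type*} [Ring R] [Ring S] (f : R →+* S) :
    f.mapMatrix (catMatrix R) = catMatrix S := by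
  ext i j
  fin_cases i <;> fin_cases j <;> simp [catMatrix, map_ofNat]

-- `A ^ 10 = !![4181, 6765; 6765, 10946]`, the Fibonacci numbers `F 19, F 20, F 21`.
theorem catMatrix_pow_ten :
    catMatrix ℤ ^ 10 = 1 + 5 • (!![836, 1353; 1353, 2189] : Matrix (Fin 2) (Fin 2) ℤ) := by
  decide

theorem exists_catMatrix_pow_two_mul_five_pow (t : ℕ) :
    ∃ Y : Matrix (Fin 2) (Fin 2) ℤ, catMatrix ℤ ^ (2 * 5 ^ t) = 1 + 5 ^ t • Y ∧ ¬5 ∣ Y 0 1 := by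
  cases t with
  | zero => exact ⟨!![1, 3; 3, 4], by decide, by decide⟩
  | succ u =>
    set Y₀ : Matrix (Fin 2) (Fin 2) ℤ := !![836, 1353; 1353, 2189]
    obtain ⟨Z, hZ⟩ := exists_one_add_five_pow_nsmul_pow_five_pow 0 u Y₀
    refine ⟨Y₀ + 5 • Z, ?_, ?_⟩
    · rw [zero_add, pow_one, zero_add] at hZ
      rw [show 2 * 5 ^ (u + 1) = 10 * 5 ^ u by ring, pow_mul, catMatrix_pow_ten, hZ]
    · simp only [Matrix.add_apply, Matrix.smul_apply]
      norm_num [Y₀]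

theorem mapMatrix_one_add_nsmul_eq_one_iff {ι : Type*} [Fintype ι] [DecidableEq ι] {m n : ℕ}
    (Y : Matrix ι ι ℤ) :
    (Int.castRingHom (ZMod m)).mapMatrix (1 + n • Y) = 1 ↔ ∀ i j, (m : ℤ) ∣ n * Y i j := by
  rw [map_add, map_one, add_eq_left, map_nsmul, ← Matrix.ext_iff]
  simp [← ZMod.intCast_zmod_eq_zero_iff_dvd]

theorem catMatrix_pow_two_mul_five_pow_succ (t : ℕ) :
    catMatrix (ZMod (5 ^ (t + 1))) ^ (2 * 5 ^ (t + 1)) = 1 := by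
  obtain ⟨Y, hY, -⟩ := exists_catMatrix_pow_two_mul_five_pow (t + 1)
  rw [← mapMatrix_catMatrix (Int.castRingHom _), ← map_pow, hY,
    mapMatrix_one_add_nsmul_eq_one_iff]
  intro i j
  push_cast
  exact dvd_mul_right _ _

theorem catMatrix_pow_two_mul_five_pow_ne_one (t : ℕ) :
    catMatrix (ZMod (5 ^ (t + 1))) ^ (2 * 5 ^ t) ≠ 1 := by
  obtain ⟨Y, hY, hY01⟩ := exists_catMatrix_pow_two_mul_five_pow t
  rw [Ne, ← mapMatrix_catMatrix (Int.castRingHom _), ← map_pow, hY,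
    mapMatrix_one_add_nsmul_eq_one_iff]
  intro h
  have h01 := h 0 1
  push_cast at h01
  rw [pow_succ, mul_dvd_mul_iff_left (by positivity)] at h01
  exact hY01 h01

theorem catMatrix_zmod_five_pow_five_pow_ne_one (t : ℕ) :
    catMatrix (ZMod 5) ^ 5 ^ (t + 1) ≠ 1 := by
  have h2 : orderOf (catMatrix (ZMod 5) ^ 5) = 2 := orderOf_eq_prime (by decide) (by decide)
  rw [Ne, pow_succ', pow_mul, ← orderOf_dvd_iff_pow_eq_one, h2]
  exact (Odd.pow (by decide : Odd 5)).not_two_dvd_nat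

theorem catMatrix_pow_five_pow_ne_one (t : ℕ) :
    catMatrix (ZMod (5 ^ (t + 1))) ^ 5 ^ (t + 1) ≠ 1 := by
  intro h
  apply catMatrix_zmod_five_pow_five_pow_ne_one t
  rw [← mapMatrix_catMatrix (ZMod.castHom (dvd_pow_self 5 t.succ_ne_zero) (ZMod 5)), ← map_pow,
    h, map_one]

theorem cat_map_period_five_pow (s : ℕ) (hs : 1 ≤ s) :
    IsLeast {M : ℕ | 0 < M ∧
        (!![1, 1; 1, 2] : Matrix (Fin 2) (Fin 2) (ZMod (5 ^ s))) ^ M = 1}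
      (2 * 5 ^ s) := by
  obtain ⟨t, rfl⟩ := Nat.exists_eq_add_of_le' hs
  have hfin := catMatrix_pow_two_mul_five_pow_succ t
  have hord : orderOf (catMatrix (ZMod (5 ^ (t + 1)))) = 2 * 5 ^ (t + 1) :=
    orderOf_eq_mul_prime_pow (by norm_num) Nat.prime_two
      (catMatrix_pow_two_mul_five_pow_ne_one t) hfin (catMatrix_pow_five_pow_ne_one t)
  exact hord ▸ isLeast_orderOf (isOfFinOrder_iff_pow_eq_one.2 ⟨_, by positivity, hfin⟩)
end
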